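/- Fix an integer N ≥ 0 and scalars D_0, …, D_{N−1} ∈ K. For each i ∈ ℤ_{≥0} define the R-linear endomorphism of P (the polynomial ring over R = K[ℏ] in the variables x^0, x^1, x^2, …): H_i = ℏ ∂_i + (ℏ²/2) Σ_{k,l ≥ 0, k+l = i+N−1} ∂_k ∂_l + ℏ Σ_{m ≥ 1} m x^m ∂_{m+i+N−1} + ℏ D_i [i ≤ N−1]. (These are the operators obtained from the untwisted Fock representation of the free boson vertex operator algebra, with bosonic zero mode b_0 = √ℏ ∂_0, after the dilaton shift b_{N−1} ↦ b_{N−1} + 1/√ℏ.) Then for all i, j ∈ ℤ_{≥0}: [H_i, H_j] = ℏ (i − j) H_{i+j+N−1}; that is, the H_i form a representation of the Virasoro subalgebra spanned by the modes L_m with m ≥ N−1. -/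

import Mathlib

/-!
Statement 4: the untwisted free-boson Virasoro operators
`H_i = ℏ ∂_i + (ℏ²/2) Σ_{k+l=i+N−1} ∂_k ∂_l + ℏ Σ_{m≥1} m x^m ∂_{m+i+N−1} + ℏ D_i [i ≤ N−1]`
acting on `P = K[ℏ][x⁰, x¹, x², …]` satisfy `[H_i, H_j] = ℏ (i−j) H_{i+j+N−1}`.
-/

noncomputable section

open MvPolynomial

/-- The carrier: polynomials over `R = K[ℏ]` in variables `x^0, x^1, x^2, …`. -/
abbrev BosonSpace (K : Type) [Field K] := MvPolynomial ℕ (Polynomial K)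

variable (K : Type) [Field K] [CharZero K]

/-- `ℏ`, as an element of `P` (acting by multiplication). -/
def hbar : BosonSpace K := MvPolynomial.C Polynomial.X

/-- `∂_a` for `a ∈ ℤ`, with the convention that it vanishes for `a < 0`. -/
def Dop (a : ℤ) (p : BosonSpace K) : BosonSpace K :=
  if 0 ≤ a then MvPolynomial.pderiv a.toNat p else 0

/-- Multiplication by `x^a` for `a ∈ ℤ`, with the convention that it vanishes for `a < 0`. -/
def Xop (a : ℤ) (p : BosonSpace K) : BosonSpace K :=
  if 0 ≤ a then MvPolynomial.X a.toNat * p else 0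

/-- The Virasoro operator
`H_i = ℏ ∂_i + (ℏ²/2) Σ_{k,l≥0, k+l=i+N−1} ∂_k ∂_l + ℏ Σ_{m≥1} m x^m ∂_{m+i+N−1}
        + ℏ D_i [i ≤ N−1]`. -/
def Hop (N : ℤ) (D : ℤ → K) (i : ℤ) (p : BosonSpace K) : BosonSpace K :=
  hbar K * Dop K i p
    + MvPolynomial.C (Polynomial.C ((2 : K)⁻¹)) * hbar K ^ 2 *
        (∑ᶠ k : ℕ, Dop K k (Dop K (i + N - 1 - k) p))
    + hbar K * (∑ᶠ m : ℤ, (m : BosonSpace K) * Xop K m (Dop K (m + i + N - 1) p))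
    + (if i ≤ N - 1 then hbar K * MvPolynomial.C (Polynomial.C (D i)) * p else 0)


set_option linter.unusedSectionVars false
set_option linter.unreachableTactic false
set_option linter.unusedTactic false
set_option maxHeartbeats 1000000

variable {K}

lemma Dop_of_neg {a : ℤ} (h : a < 0) (p : BosonSpace K) : Dop K a p = 0 := by
  simp [Dop, not_le.2 h]

lemma Dop_zero (a : ℤ) : Dop K a (0 : BosonSpace K) = 0 := by
  unfold Dop; split <;> simp

lemma Xop_zero (a : ℤ) : Xop K a (0 : BosonSpace K) = 0 := by
  unfold Xop; split <;> simp

lemma Xop_of_neg {a : ℤ} (h : a < 0) (p : BosonSpace K) : Xop K a p = 0 := by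
  simp [Xop, not_le.2 h]

lemma Dop_add (a : ℤ) (p q : BosonSpace K) : Dop K a (p + q) = Dop K a p + Dop K a q := by
  unfold Dop; split <;> simp

lemma Xop_add (a : ℤ) (p q : BosonSpace K) : Xop K a (p + q) = Xop K a p + Xop K a q := by
  unfold Xop; split <;> [ring; simp]

lemma Dop_C_mul (a : ℤ) (c : Polynomial K) (p : BosonSpace K) :
    Dop K a (MvPolynomial.C c * p) = MvPolynomial.C c * Dop K a p := by
  unfold Dop; split
  · exact pderiv_C_mul
  · simp

lemma Xop_mul_left (a : ℤ) (c p : BosonSpace K) :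
    Xop K a (c * p) = c * Xop K a p := by
  unfold Xop; split <;> [ring; simp]

/-- Constants (images of `C`). -/
def IsC (c : BosonSpace K) : Prop := ∃ r : Polynomial K, c = MvPolynomial.C r

lemma IsC.hbar : IsC (hbar K) := ⟨_, rfl⟩
lemma IsC.zero : IsC (0 : BosonSpace K) := ⟨0, by simp⟩
lemma IsC.one : IsC (1 : BosonSpace K) := ⟨1, by simp⟩
lemma IsC.C (r : Polynomial K) : IsC (MvPolynomial.C r : BosonSpace K) := ⟨r, rfl⟩
lemma IsC.mul {c d : BosonSpace K} (hc : IsC c) (hd : IsC d) : IsC (c * d) := by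
  obtain ⟨r, rfl⟩ := hc; obtain ⟨s, rfl⟩ := hd; exact ⟨r * s, by simp⟩
lemma IsC.pow {c : BosonSpace K} (hc : IsC c) (n : ℕ) : IsC (c ^ n) := by
  obtain ⟨r, rfl⟩ := hc; exact ⟨r ^ n, by simp⟩
lemma IsC.intCast (m : ℤ) : IsC ((m : BosonSpace K)) := ⟨(m : Polynomial K), (map_intCast (MvPolynomial.C : Polynomial K →+* BosonSpace K) m).symm⟩
lemma IsC.ite {c : BosonSpace K} (P : Prop) [Decidable P] (hc : IsC c) :
    IsC (if P then c else 0) := by split <;> [exact hc; exact IsC.zero]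

lemma Dop_const_mul {c : BosonSpace K} (hc : IsC c) (a : ℤ) (p : BosonSpace K) :
    Dop K a (c * p) = c * Dop K a p := by
  obtain ⟨r, rfl⟩ := hc; exact Dop_C_mul a r p

lemma Dop_sum (a : ℤ) {α : Type*} (s : Finset α) (f : α → BosonSpace K) :
    Dop K a (∑ x ∈ s, f x) = ∑ x ∈ s, Dop K a (f x) := by
  unfold Dop; split
  · exact map_sum _ _ _
  · simp

lemma Xop_sum (a : ℤ) {α : Type*} (s : Finset α) (f : α → BosonSpace K) :
    Xop K a (∑ x ∈ s, f x) = ∑ x ∈ s, Xop K a (f x) := by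
  unfold Xop; split
  · exact Finset.mul_sum _ _ _
  · simp

lemma pderiv_pderiv_comm {R : Type*} [CommRing R] (i j : ℕ) (p : MvPolynomial ℕ R) :
    pderiv i (pderiv j p) = pderiv j (pderiv i p) := by
  induction p using MvPolynomial.induction_on with
  | C a => simp [pderiv_C]
  | add p q hp hq => simp [map_add, hp, hq]
  | mul_X p n hp =>
      simp only [pderiv_mul, map_add, hp, pderiv_X]
      rcases eq_or_ne n i with rfl | hni <;> rcases eq_or_ne n j with rfl | hnj <;>
        simp [Pi.single_apply, *] <;> ring

lemma Dop_Dop_comm (a b : ℤ) (p : BosonSpace K) :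
    Dop K a (Dop K b p) = Dop K b (Dop K a p) := by
  rcases lt_or_ge a 0 with ha | ha
  · simp [Dop_of_neg ha, Dop_zero]
  rcases lt_or_ge b 0 with hb | hb
  · simp [Dop_of_neg hb, Dop_zero]
  simp only [Dop, if_pos ha, if_pos hb]
  exact pderiv_pderiv_comm _ _ _

lemma Dop_Xop (a b : ℤ) (p : BosonSpace K) :
    Dop K a (Xop K b p) = Xop K b (Dop K a p) + if a = b ∧ 0 ≤ a then p else 0 := by
  rcases lt_or_ge a 0 with ha | ha
  · rw [Dop_of_neg ha, if_neg (by omega), Dop_of_neg ha, Xop_zero, add_zero]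
  rcases lt_or_ge b 0 with hb | hb
  · rw [Xop_of_neg hb, Dop_zero, Xop_of_neg hb, if_neg (by omega), add_zero]
  have hab : a = b ↔ a.toNat = b.toNat := by omega
  simp only [Dop, Xop, if_pos ha, if_pos hb, pderiv_mul, pderiv_X]
  rcases eq_or_ne a b with h | h
  · rw [if_pos ⟨h, ha⟩, h, Pi.single_eq_same]; ring
  · rw [if_neg (by tauto), Pi.single_eq_of_ne (by omega)]; ring

lemma exists_bound (p : BosonSpace K) : ∃ B : ℕ, ∀ a : ℤ, (B : ℤ) ≤ a → Dop K a p = 0 := by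
  refine ⟨p.vars.sup id + 1, fun a ha => ?_⟩
  have h0 : 0 ≤ a := by omega
  rw [Dop, if_pos h0]
  apply pderiv_eq_zero_of_notMem_vars
  intro hmem
  have := Finset.le_sup (f := id) hmem
  simp only [id] at this
  omega

-- reindex lemma
lemma sum_Icc_reindex {M : Type*} [AddCommMonoid M] (a b c : ℤ) (f : ℤ → M) :
    ∑ k ∈ Finset.Icc a b, f k = ∑ k ∈ Finset.Icc (c - b) (c - a), f (c - k) := by
  apply Finset.sum_nbij' (i := fun k => c - k) (j := fun k => c - k)
  · intro x hx; simp only [Finset.mem_Icc] at *; omega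
  · intro x hx; simp only [Finset.mem_Icc] at *; omega
  · intro x _; omega
  · intro x _; omega
  · intro x _; congr 1; omega
lemma sum_congr_support {M : Type*} [AddCommMonoid M] (u v : Finset ℤ) (g : ℤ → M)
    (h : ∀ k, ((k ∈ u ∧ k ∉ v) ∨ (k ∈ v ∧ k ∉ u)) → g k = 0) :
    ∑ k ∈ u, g k = ∑ k ∈ v, g k := by
  have h1 : ∑ k ∈ u, g k = ∑ k ∈ u ∪ v, g k := by
    apply Finset.sum_subset Finset.subset_union_left
    intro x hx hxu
    exact h x (Or.inr ⟨(Finset.mem_union.mp hx).resolve_left hxu, hxu⟩)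
  have h2 : ∑ k ∈ v, g k = ∑ k ∈ u ∪ v, g k := by
    apply Finset.sum_subset Finset.subset_union_right
    intro x hx hxv
    exact h x (Or.inl ⟨(Finset.mem_union.mp hx).resolve_right hxv, hxv⟩)
  rw [h1, h2]

-- ===== Finite-sum versions of the operators =====

variable (K) in
/-- Finite-sum version of the `∂∂` part. -/
def TBop (B : ℕ) (s : ℤ) (p : BosonSpace K) : BosonSpace K :=
  ∑ k ∈ Finset.Icc (0 : ℤ) ((B : ℤ) - 1), Dop K k (Dop K (s - k) p)

variable (K) in
/-- Finite-sum version of the `x∂` part. -/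
def TCop (B : ℕ) (s : ℤ) (p : BosonSpace K) : BosonSpace K :=
  ∑ m ∈ Finset.Icc (1 : ℤ) (B : ℤ), (m : BosonSpace K) * Xop K m (Dop K (m + s) p)

variable (K) in
/-- The boundary chunk appearing in the `[∂∂, x∂]` commutator. -/
def chunkC (B : ℕ) (s u : ℤ) (p : BosonSpace K) : BosonSpace K :=
  ∑ k ∈ Finset.Icc (0 : ℤ) ((B : ℤ) - 1),
    ((if 1 ≤ s - k then s - k else 0 : ℤ) : BosonSpace K) * Dop K k (Dop K (u - k) p)

variable (K) in
def c2 : BosonSpace K := MvPolynomial.C (Polynomial.C ((2 : K)⁻¹))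

variable (K) in
def Eop (N : ℤ) (D : ℤ → K) (i : ℤ) : BosonSpace K :=
  if i ≤ N - 1 then hbar K * MvPolynomial.C (Polynomial.C (D i)) else 0

variable (K) in
/-- Finite-sum version of `Hop`. -/
def HopF (B : ℕ) (N : ℤ) (D : ℤ → K) (i : ℤ) (p : BosonSpace K) : BosonSpace K :=
  hbar K * Dop K i p + c2 K * hbar K ^ 2 * TBop K B (i + N - 1) p
    + hbar K * TCop K B (i + N - 1) p + Eop K N D i * p

lemma IsC.eop (N : ℤ) (D : ℤ → K) (i : ℤ) : IsC (Eop K N D i) :=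
  IsC.ite _ (IsC.mul IsC.hbar (IsC.C _))

lemma Hop_eq_HopF {B : ℕ} {N i : ℤ} (D : ℤ → K) (p : BosonSpace K)
    (hiN : -1 ≤ i + N) (h1 : i + N - 1 < (B : ℤ))
    (hb : ∀ a : ℤ, (B : ℤ) - 1 ≤ a → Dop K a p = 0) :
    Hop K N D i p = HopF K B N D i p := by
  have hB : (∑ᶠ k : ℕ, Dop K k (Dop K (i + N - 1 - k) p)) = TBop K B (i + N - 1) p := by
    rw [finsum_eq_finset_sum_of_support_subset _ (s := Finset.range B) ?sub]
    case sub =>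
      intro k hk
      simp only [Function.mem_support, ne_eq] at hk
      simp only [Finset.coe_range, Set.mem_Iio]
      by_contra hkB
      push_neg at hkB
      exact hk (by rw [Dop_of_neg (show i + N - 1 - (k:ℤ) < 0 by omega), Dop_zero])
    unfold TBop
    refine Finset.sum_nbij' (fun k => (k : ℤ)) (fun z => z.toNat) ?_ ?_ ?_ ?_ ?_
    · intro x hx; simp only [Finset.mem_range] at hx; simp only [Finset.mem_Icc]; omega
    · intro x hx; simp only [Finset.mem_Icc] at hx; simp only [Finset.mem_range]; omega
    · intro x hx; simp only [Finset.mem_range] at hx; omega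
    · intro x hx; simp only [Finset.mem_Icc] at hx; omega
    · intro x _; rfl
  have hC : (∑ᶠ m : ℤ, (m : BosonSpace K) * Xop K m (Dop K (m + i + N - 1) p))
      = TCop K B (i + N - 1) p := by
    rw [finsum_eq_finset_sum_of_support_subset _ (s := Finset.Icc (1 : ℤ) (B : ℤ)) ?sub]
    case sub =>
      intro m hm
      simp only [Function.mem_support, ne_eq] at hm
      simp only [Finset.coe_Icc, Set.mem_Icc]
      constructor
      · by_contra h1m
        push_neg at h1m
        rcases eq_or_lt_of_le (show m ≤ 0 by omega) with rfl | hm0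
        · exact hm (by simp)
        · exact hm (by rw [Xop_of_neg (by omega), mul_zero])
      · by_contra hmB
        push_neg at hmB
        exact hm (by rw [hb (m + i + N - 1) (by omega), Xop_zero, mul_zero])
    unfold TCop
    apply Finset.sum_congr rfl
    intro m _
    rw [show m + i + N - 1 = m + (i + N - 1) from by ring]
  unfold Hop HopF c2 Eop
  rw [hB, hC]
  split_ifs <;> ring

-- ===== pushing lemmas =====

lemma IsC.c2 : IsC (c2 K) := ⟨_, rfl⟩

lemma TBop_add (B : ℕ) (s : ℤ) (p q : BosonSpace K) :
    TBop K B s (p + q) = TBop K B s p + TBop K B s q := by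
  unfold TBop
  rw [← Finset.sum_add_distrib]
  exact Finset.sum_congr rfl fun k _ => by rw [Dop_add, Dop_add]

lemma TCop_add (B : ℕ) (s : ℤ) (p q : BosonSpace K) :
    TCop K B s (p + q) = TCop K B s p + TCop K B s q := by
  unfold TCop
  rw [← Finset.sum_add_distrib]
  exact Finset.sum_congr rfl fun m _ => by rw [Dop_add, Xop_add, mul_add]

lemma TBop_const_mul {c : BosonSpace K} (hc : IsC c) (B : ℕ) (s : ℤ) (p : BosonSpace K) :
    TBop K B s (c * p) = c * TBop K B s p := by
  unfold TBop; rw [Finset.mul_sum]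
  exact Finset.sum_congr rfl fun k _ => by rw [Dop_const_mul hc, Dop_const_mul hc]

lemma TCop_const_mul {c : BosonSpace K} (hc : IsC c) (B : ℕ) (s : ℤ) (p : BosonSpace K) :
    TCop K B s (c * p) = c * TCop K B s p := by
  unfold TCop; rw [Finset.mul_sum]
  refine Finset.sum_congr rfl fun m _ => ?_
  rw [Dop_const_mul hc, Xop_mul_left]; ring

lemma Dop_hbar_mul (a : ℤ) (p : BosonSpace K) :
    Dop K a (hbar K * p) = hbar K * Dop K a p := Dop_const_mul IsC.hbar a p
lemma Dop_cc_mul (a : ℤ) (q : BosonSpace K) :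
    Dop K a (c2 K * hbar K ^ 2 * q) = c2 K * hbar K ^ 2 * Dop K a q :=
  Dop_const_mul (IsC.c2.mul (IsC.hbar.pow 2)) a q
lemma Dop_eop_mul (N : ℤ) (D : ℤ → K) (i a : ℤ) (q : BosonSpace K) :
    Dop K a (Eop K N D i * q) = Eop K N D i * Dop K a q := Dop_const_mul (IsC.eop N D i) a q
lemma TBop_hbar_mul (B : ℕ) (s : ℤ) (p : BosonSpace K) :
    TBop K B s (hbar K * p) = hbar K * TBop K B s p := TBop_const_mul IsC.hbar B s p
lemma TBop_cc_mul (B : ℕ) (s : ℤ) (q : BosonSpace K) :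
    TBop K B s (c2 K * hbar K ^ 2 * q) = c2 K * hbar K ^ 2 * TBop K B s q :=
  TBop_const_mul (IsC.c2.mul (IsC.hbar.pow 2)) B s q
lemma TBop_eop_mul (N : ℤ) (D : ℤ → K) (i : ℤ) (B : ℕ) (s : ℤ) (q : BosonSpace K) :
    TBop K B s (Eop K N D i * q) = Eop K N D i * TBop K B s q :=
  TBop_const_mul (IsC.eop N D i) B s q
lemma TCop_hbar_mul (B : ℕ) (s : ℤ) (p : BosonSpace K) :
    TCop K B s (hbar K * p) = hbar K * TCop K B s p := TCop_const_mul IsC.hbar B s p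
lemma TCop_cc_mul (B : ℕ) (s : ℤ) (q : BosonSpace K) :
    TCop K B s (c2 K * hbar K ^ 2 * q) = c2 K * hbar K ^ 2 * TCop K B s q :=
  TCop_const_mul (IsC.c2.mul (IsC.hbar.pow 2)) B s q
lemma TCop_eop_mul (N : ℤ) (D : ℤ → K) (i : ℤ) (B : ℕ) (s : ℤ) (q : BosonSpace K) :
    TCop K B s (Eop K N D i * q) = Eop K N D i * TCop K B s q :=
  TCop_const_mul (IsC.eop N D i) B s q

lemma Dop_TBop (a : ℤ) (B : ℕ) (s : ℤ) (p : BosonSpace K) :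
    Dop K a (TBop K B s p) = TBop K B s (Dop K a p) := by
  unfold TBop; rw [Dop_sum]
  exact Finset.sum_congr rfl fun k _ => by rw [Dop_Dop_comm a, Dop_Dop_comm a]

lemma Dop_swap4 (a b x y : ℤ) (p : BosonSpace K) :
    Dop K a (Dop K b (Dop K x (Dop K y p))) = Dop K x (Dop K y (Dop K a (Dop K b p))) := by
  rw [Dop_Dop_comm b x, Dop_Dop_comm b y, Dop_Dop_comm a x]
  congr 1
  rw [Dop_Dop_comm a y]

lemma Xop_Xop_comm (a b : ℤ) (p : BosonSpace K) :
    Xop K a (Xop K b p) = Xop K b (Xop K a p) := by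
  unfold Xop; split_ifs <;> ring

lemma TBop_TBop (B : ℕ) (s t : ℤ) (p : BosonSpace K) :
    TBop K B s (TBop K B t p) = TBop K B t (TBop K B s p) := by
  unfold TBop
  have h1 : ∀ k ∈ Finset.Icc (0:ℤ) ((B:ℤ)-1),
      Dop K k (Dop K (s-k) (∑ l ∈ Finset.Icc (0:ℤ) ((B:ℤ)-1), Dop K l (Dop K (t-l) p)))
        = ∑ l ∈ Finset.Icc (0:ℤ) ((B:ℤ)-1), Dop K l (Dop K (t-l) (Dop K k (Dop K (s-k) p))) := by
    intro k _
    rw [Dop_sum, Dop_sum]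
    exact Finset.sum_congr rfl fun l _ => Dop_swap4 k (s-k) l (t-l) p
  rw [Finset.sum_congr rfl h1, Finset.sum_comm]
  refine Finset.sum_congr rfl fun l _ => ?_
  rw [Dop_sum, Dop_sum]

lemma Dop_TCop (a : ℤ) (B : ℕ) (t : ℤ) (p : BosonSpace K)
    (ha : 0 ≤ a) (haB : a ≤ (B : ℤ)) :
    Dop K a (TCop K B t p)
      = TCop K B t (Dop K a p) + (a : BosonSpace K) * Dop K (a + t) p := by
  unfold TCop
  rw [Dop_sum]
  have step : ∀ m ∈ Finset.Icc (1:ℤ) (B:ℤ),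
      Dop K a ((m : BosonSpace K) * Xop K m (Dop K (m+t) p))
        = (m : BosonSpace K) * Xop K m (Dop K (m+t) (Dop K a p))
          + (if a = m then (m : BosonSpace K) * Dop K (m+t) p else 0) := by
    intro m _
    rw [Dop_const_mul (IsC.intCast m), Dop_Xop, Dop_Dop_comm a (m+t)]
    simp only [ha, and_true]
    split_ifs <;> ring
  rw [Finset.sum_congr rfl step, Finset.sum_add_distrib]
  congr 1
  rw [Finset.sum_ite_eq (Finset.Icc (1:ℤ) (B:ℤ)) a
    (fun m => (m : BosonSpace K) * Dop K (m+t) p)]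
  rcases eq_or_lt_of_le ha with rfl | ha0
  · rw [if_neg (by simp)]
    simp
  · rw [if_pos (Finset.mem_Icc.mpr ⟨by omega, haB⟩)]

-- ===== the [x∂, x∂] bracket =====

lemma TCop_expand (B : ℕ) (s t : ℤ) (p : BosonSpace K) (hs : -1 ≤ s) (ht : -1 ≤ t)
    (hb : ∀ a : ℤ, (B : ℤ) - 1 ≤ a → Dop K a p = 0) :
    TCop K B s (TCop K B t p)
      = (∑ m ∈ Finset.Icc (1:ℤ) (B:ℤ), ∑ n ∈ Finset.Icc (1:ℤ) (B:ℤ),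
          ((m : BosonSpace K) * (n : BosonSpace K)) *
            Xop K m (Xop K n (Dop K (m+s) (Dop K (n+t) p))))
        + ∑ m ∈ Finset.Icc (1:ℤ) (B:ℤ),
            ((m : BosonSpace K) * ((m+s : ℤ) : BosonSpace K)) * Xop K m (Dop K (m+s+t) p) := by
  unfold TCop
  rw [← Finset.sum_add_distrib]
  refine Finset.sum_congr rfl fun m hm => ?_
  have hm' := Finset.mem_Icc.mp hm
  rw [Dop_sum, Xop_sum, Finset.mul_sum]
  have h0 : 0 ≤ m + s := by omega
  have step : ∀ n ∈ Finset.Icc (1:ℤ) (B:ℤ),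
      (m : BosonSpace K) * Xop K m (Dop K (m+s) ((n : BosonSpace K) * Xop K n (Dop K (n+t) p)))
        = ((m : BosonSpace K) * (n : BosonSpace K)) *
            Xop K m (Xop K n (Dop K (m+s) (Dop K (n+t) p)))
          + (if m + s = n
              then ((m : BosonSpace K) * ((n:ℤ) : BosonSpace K)) * Xop K m (Dop K (n+t) p)
              else 0) := by
    intro n _
    rw [Dop_const_mul (IsC.intCast n), Dop_Xop]
    simp only [h0, and_true]
    rw [Xop_mul_left, Xop_add, apply_ite (Xop K m), Xop_zero]
    split_ifs <;> ring
  rw [Finset.sum_congr rfl step, Finset.sum_add_distrib]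
  congr 1
  rw [Finset.sum_ite_eq (Finset.Icc (1:ℤ) (B:ℤ)) (m+s)
    (fun n => ((m : BosonSpace K) * ((n:ℤ) : BosonSpace K)) * Xop K m (Dop K (n+t) p))]
  by_cases hin : m + s ∈ Finset.Icc (1:ℤ) (B:ℤ)
  · rw [if_pos hin]
  · rw [if_neg hin]
    simp only [Finset.mem_Icc, not_and_or, not_le] at hin
    rcases hin with h1' | h1'
    · have h00 : m + s = 0 := by omega
      rw [h00]
      simp
    · rw [hb (m + s + t) (by omega), Xop_zero, mul_zero]

lemma TCop_TCop (B : ℕ) (s t u : ℤ) (p : BosonSpace K) (hs : -1 ≤ s) (ht : -1 ≤ t)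
    (hu : u = s + t) (hb : ∀ a : ℤ, (B : ℤ) - 1 ≤ a → Dop K a p = 0) :
    TCop K B s (TCop K B t p)
      = TCop K B t (TCop K B s p)
        + ((s : BosonSpace K) - (t : BosonSpace K)) * TCop K B u p := by
  rw [TCop_expand B s t p hs ht hb, TCop_expand B t s p ht hs hb]
  have hsym : (∑ m ∈ Finset.Icc (1:ℤ) (B:ℤ), ∑ n ∈ Finset.Icc (1:ℤ) (B:ℤ),
          ((m : BosonSpace K) * (n : BosonSpace K)) *
            Xop K m (Xop K n (Dop K (m+s) (Dop K (n+t) p))))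
      = (∑ m ∈ Finset.Icc (1:ℤ) (B:ℤ), ∑ n ∈ Finset.Icc (1:ℤ) (B:ℤ),
          ((m : BosonSpace K) * (n : BosonSpace K)) *
            Xop K m (Xop K n (Dop K (m+t) (Dop K (n+s) p)))) := by
    rw [Finset.sum_comm]
    refine Finset.sum_congr rfl fun a _ => Finset.sum_congr rfl fun b _ => ?_
    rw [Xop_Xop_comm b a, Dop_Dop_comm (b+s) (a+t)]
    ring
  rw [hsym, hu, add_assoc]
  congr 1
  unfold TCop
  rw [Finset.mul_sum, ← Finset.sum_add_distrib]
  refine Finset.sum_congr rfl fun m _ => ?_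
  rw [show m+t+s = m+s+t from by ring, show m+(s+t) = m+s+t from by ring]
  push_cast
  ring

-- ===== the flip identity (chunk1 = chunk2) =====

lemma chunkFlip (B : ℕ) (s t u : ℤ) (p : BosonSpace K) (hu : u = s + t)
    (hsB : s ≤ (B:ℤ) - 1) :
    (∑ k ∈ Finset.Icc (0:ℤ) ((B:ℤ)-1),
        ((if 1 ≤ k then k else 0 : ℤ) : BosonSpace K) * Dop K (s-k) (Dop K (k+t) p))
      = chunkC K B s u p := by
  subst hu
  have e0 : ∀ k ∈ Finset.Icc (0:ℤ) ((B:ℤ)-1),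
      ((if 1 ≤ k then k else 0 : ℤ) : BosonSpace K) * Dop K (s-k) (Dop K (k+t) p)
        = (fun k => ((if 1 ≤ k ∧ k ≤ s then k else 0 : ℤ) : BosonSpace K) *
            Dop K (s-k) (Dop K (k+t) p)) k := by
    intro k _
    dsimp only
    rcases le_or_gt k s with h | h
    · rw [show (if 1 ≤ k ∧ k ≤ s then k else 0 : ℤ) = (if 1 ≤ k then k else 0) from
        by split_ifs <;> omega]
    · rw [Dop_of_neg (show s - k < 0 by omega), mul_zero, mul_zero]
  rw [Finset.sum_congr rfl e0, sum_Icc_reindex 0 ((B:ℤ)-1) s]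
  rw [sum_congr_support _ (Finset.Icc (0:ℤ) ((B:ℤ)-1)) _ ?van]
  case van =>
    intro k hk
    simp only [Finset.mem_Icc, not_and_or, not_le] at hk
    rcases hk with ⟨⟨hk1, hk2⟩, h3⟩ | ⟨⟨hk1, hk2⟩, h3⟩
    · have hneg : k < 0 := by omega
      rw [Dop_of_neg (show s - (s-k) < 0 by omega), mul_zero]
    · have hks : s < k := by omega
      rw [if_neg (by omega), Int.cast_zero, zero_mul]
  unfold chunkC
  refine Finset.sum_congr rfl fun k hk => ?_
  have hk' := Finset.mem_Icc.mp hk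
  rw [show s - (s - k) = k from by ring, show (s-k) + t = (s+t) - k from by ring,
      show (if 1 ≤ s - k ∧ s - k ≤ s then s - k else 0 : ℤ)
        = (if 1 ≤ s - k then s - k else 0) from by split_ifs <;> omega]

-- ===== the [∂∂, x∂] bracket =====

lemma TBop_TCop (B : ℕ) (s t u : ℤ) (p : BosonSpace K) (hu : u = s + t)
    (hsB : s ≤ (B:ℤ) - 1) :
    TBop K B s (TCop K B t p)
      = TCop K B t (TBop K B s p) + (chunkC K B s u p + chunkC K B s u p) := by
  have key : TBop K B s (TCop K B t p)
      = (∑ k ∈ Finset.Icc (0:ℤ) ((B:ℤ)-1), ∑ m ∈ Finset.Icc (1:ℤ) (B:ℤ),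
          (m : BosonSpace K) * Xop K m (Dop K k (Dop K (s-k) (Dop K (m+t) p))))
        + ((∑ k ∈ Finset.Icc (0:ℤ) ((B:ℤ)-1),
            ((if 1 ≤ k then k else 0 : ℤ) : BosonSpace K) * Dop K (s-k) (Dop K (k+t) p))
          + chunkC K B s u p) := by
    unfold TBop chunkC
    rw [← Finset.sum_add_distrib, ← Finset.sum_add_distrib]
    refine Finset.sum_congr rfl fun k hk => ?_
    have hk' := Finset.mem_Icc.mp hk
    unfold TCop
    rw [Dop_sum, Dop_sum]
    have h0k : (0:ℤ) ≤ k := hk'.1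
    have step : ∀ m ∈ Finset.Icc (1:ℤ) (B:ℤ),
        Dop K k (Dop K (s-k) ((m : BosonSpace K) * Xop K m (Dop K (m+t) p)))
          = (m : BosonSpace K) * Xop K m (Dop K k (Dop K (s-k) (Dop K (m+t) p)))
            + ((if k = m then (m : BosonSpace K) * Dop K (s-k) (Dop K (m+t) p) else 0)
              + (if s - k = m ∧ 0 ≤ s - k then (m : BosonSpace K) * Dop K k (Dop K (m+t) p)
                  else 0)) := by
      intro m _
      rw [Dop_const_mul (IsC.intCast m), Dop_Xop, Dop_const_mul (IsC.intCast m), Dop_add,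
        Dop_Xop, apply_ite (Dop K k), Dop_zero]
      simp only [h0k, and_true]
      split_ifs <;> ring
    rw [Finset.sum_congr rfl step, Finset.sum_add_distrib, Finset.sum_add_distrib]
    congr 1
    congr 1
    · rw [Finset.sum_ite_eq (Finset.Icc (1:ℤ) (B:ℤ)) k
        (fun m => (m : BosonSpace K) * Dop K (s-k) (Dop K (m+t) p))]
      by_cases h1k : 1 ≤ k
      · rw [if_pos (Finset.mem_Icc.mpr ⟨h1k, by omega⟩), if_pos h1k]
      · rw [if_neg (by simp only [Finset.mem_Icc]; omega), if_neg h1k]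
        simp
    · rcases le_or_gt 0 (s-k) with hpos | hneg
      · simp only [hpos, and_true]
        rw [Finset.sum_ite_eq (Finset.Icc (1:ℤ) (B:ℤ)) (s-k)
          (fun m => (m : BosonSpace K) * Dop K k (Dop K (m+t) p))]
        by_cases h1 : 1 ≤ s - k
        · rw [if_pos (Finset.mem_Icc.mpr ⟨h1, by omega⟩), if_pos h1,
            show s - k + t = u - k from by omega]
        · rw [if_neg (by simp only [Finset.mem_Icc]; omega), if_neg h1]
          simp
      · have hz : ∀ m ∈ Finset.Icc (1:ℤ) (B:ℤ),
            (if s - k = m ∧ 0 ≤ s - k then (m : BosonSpace K) * Dop K k (Dop K (m+t) p) else 0)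
              = 0 := fun m _ => if_neg (by omega)
        rw [Finset.sum_congr rfl hz, Finset.sum_const_zero, if_neg (by omega)]
        simp
  rw [key, chunkFlip B s t u p hu hsB]
  congr 1
  unfold TCop TBop
  rw [Finset.sum_comm]
  refine Finset.sum_congr rfl fun m _ => ?_
  rw [Dop_sum, Xop_sum, Finset.mul_sum]
  refine Finset.sum_congr rfl fun k _ => ?_
  rw [Dop_Dop_comm (s-k) (m+t), Dop_Dop_comm k (m+t)]

-- ===== the master symmetrization identity =====

lemma chunkMaster (B : ℕ) (s t u : ℤ) (p : BosonSpace K) (hu : u = s + t)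
    (hstB : u ≤ (B:ℤ) - 1) :
    (chunkC K B s u p + chunkC K B s u p) - (chunkC K B t u p + chunkC K B t u p)
      = ((s : BosonSpace K) - (t : BosonSpace K)) * TBop K B u p := by
  subst hu
  set W : BosonSpace K := ∑ k ∈ Finset.Icc (0:ℤ) ((B:ℤ)-1),
      (((2*(if 1 ≤ s-k then s-k else 0) - 2*(if 1 ≤ t-k then t-k else 0) - (s-t)) : ℤ) :
        BosonSpace K) * Dop K k (Dop K (s+t-k) p) with hW
  have hW1 : (chunkC K B s (s+t) p + chunkC K B s (s+t) p)
        - (chunkC K B t (s+t) p + chunkC K B t (s+t) p)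
        - ((s : BosonSpace K) - (t : BosonSpace K)) * TBop K B (s+t) p = W := by
    rw [hW]
    unfold chunkC TBop
    rw [Finset.mul_sum, ← Finset.sum_add_distrib, ← Finset.sum_add_distrib,
      ← Finset.sum_sub_distrib, ← Finset.sum_sub_distrib]
    refine Finset.sum_congr rfl fun k _ => ?_
    push_cast
    ring
  have hWr : W = ∑ k ∈ Finset.Icc (0:ℤ) ((B:ℤ)-1),
      (((2*(if 1 ≤ k-t then k-t else 0) - 2*(if 1 ≤ k-s then k-s else 0) - (s-t)) : ℤ) :
        BosonSpace K) * Dop K k (Dop K (s+t-k) p) := by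
    rw [hW, sum_Icc_reindex 0 ((B:ℤ)-1) (s+t)]
    rw [sum_congr_support _ (Finset.Icc (0:ℤ) ((B:ℤ)-1)) _ ?van]
    case van =>
      intro k hk
      simp only [Finset.mem_Icc, not_and_or, not_le] at hk
      rcases hk with ⟨⟨hk1, hk2⟩, h3⟩ | ⟨⟨hk1, hk2⟩, h3⟩
      · -- k in reflected interval, k ∉ Icc 0 (B-1):  k < 0
        have hneg : k < 0 := by omega
        rw [Dop_of_neg (show s + t - (s + t - k) < 0 by omega), Dop_zero, mul_zero]
      · -- k ∈ Icc 0 (B-1), outside reflected interval: k > s+t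
        have hks : s + t < k := by omega
        rw [Dop_of_neg (show s + t - k < 0 by omega), mul_zero]
    refine Finset.sum_congr rfl fun k hk => ?_
    have hk' := Finset.mem_Icc.mp hk
    rw [show s - (s + t - k) = k - t from by ring, show t - (s + t - k) = k - s from by ring,
      show s + t - (s + t - k) = k from by ring, Dop_Dop_comm]
  have hW2 : W + W = 0 := by
    nth_rewrite 2 [hWr]
    rw [hW, ← Finset.sum_add_distrib]
    rw [show (0 : BosonSpace K) = ∑ k ∈ Finset.Icc (0:ℤ) ((B:ℤ)-1), (0 : BosonSpace K) from
      (Finset.sum_const_zero).symm]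
    refine Finset.sum_congr rfl fun k _ => ?_
    rw [← add_mul, ← Int.cast_add,
      show ((2*(if 1 ≤ s-k then s-k else 0) - 2*(if 1 ≤ t-k then t-k else 0) - (s-t))
        + (2*(if 1 ≤ k-t then k-t else 0) - 2*(if 1 ≤ k-s then k-s else 0) - (s-t)) : ℤ) = 0
        from by split_ifs <;> omega]
    simp
  have hW0 : W = 0 := add_self_eq_zero.mp hW2
  linear_combination hW1 + hW0

-- ===== assembly =====

lemma HopF_comm (B : ℕ) (N : ℤ) (D : ℤ → K) (i j : ℤ) (p : BosonSpace K)
    (hi : 0 ≤ i) (hj : 0 ≤ j) (hN : 0 ≤ N) (hBig : i + j + 2*N ≤ (B:ℤ))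
    (hb : ∀ a : ℤ, (B:ℤ) - 1 ≤ a → Dop K a p = 0) :
    HopF K B N D i (HopF K B N D j p) - HopF K B N D j (HopF K B N D i p)
      = hbar K * ((i - j : ℤ) : BosonSpace K) * HopF K B N D (i+j+N-1) p := by
  have hE : hbar K * ((i : BosonSpace K) - (j : BosonSpace K)) * (Eop K N D (i+j+N-1) * p)
      = 0 := by
    by_cases hr : i+j+N-1 ≤ N-1
    · have hi0 : i = 0 := by omega
      have hj0 : j = 0 := by omega
      rw [hi0, hj0]
      simp
    · have hzero : Eop K N D (i+j+N-1) = 0 := by unfold Eop; rw [if_neg hr]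
      rw [hzero]
      ring
  have M := chunkMaster B (i+N-1) (j+N-1) (i+j+2*N-2) p (by ring) (by omega)
  simp only [HopF]
  simp only [Dop_add, TBop_add, TCop_add, mul_add, Dop_hbar_mul, Dop_cc_mul, Dop_eop_mul,
    TBop_hbar_mul, TBop_cc_mul, TBop_eop_mul, TCop_hbar_mul, TCop_cc_mul, TCop_eop_mul,
    Dop_TBop]
  rw [Dop_TCop i B (j+N-1) p hi (by omega), Dop_TCop j B (i+N-1) p hj (by omega),
    TBop_TCop B (i+N-1) (j+N-1) (i+j+2*N-2) p (by ring) (by omega),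
    TBop_TCop B (j+N-1) (i+N-1) (i+j+2*N-2) p (by ring) (by omega),
    TCop_TCop B (i+N-1) (j+N-1) (i+j+2*N-2) p (by omega) (by omega) (by ring) hb,
    TBop_TBop B (j+N-1) (i+N-1) p,
    Dop_Dop_comm j i p,
    show i + (j+N-1) = i+j+N-1 from by ring,
    show j + (i+N-1) = i+j+N-1 from by ring,
    show i + j + N - 1 + N - 1 = i+j+2*N-2 from by ring]
  push_cast at M hE ⊢
  linear_combination (c2 K * hbar K ^ 2 * hbar K) * M - hE

/-- For every integer `N ≥ 0` and scalars `D_0, …, D_{N−1}`, the operators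
`H_i`, `i ∈ ℤ_{≥0}`, satisfy `[H_i, H_j] = ℏ (i − j) H_{i+j+N−1}`, i.e. they form a
representation of the Virasoro subalgebra spanned by the modes `L_m`, `m ≥ N−1`. -/
theorem statement4 (N : ℤ) (hN : 0 ≤ N) (D : ℤ → K) :
    ∀ i j : ℤ, 0 ≤ i → 0 ≤ j → ∀ p : BosonSpace K,
      Hop K N D i (Hop K N D j p) - Hop K N D j (Hop K N D i p)
        = hbar K * ((i - j : ℤ) : BosonSpace K) * Hop K N D (i + j + N - 1) p := by
  intro i j hi hj p
  obtain ⟨B0, hB0⟩ := exists_bound p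
  obtain ⟨B1, hB1⟩ := exists_bound (Hop K N D j p)
  obtain ⟨B2, hB2⟩ := exists_bound (Hop K N D i p)
  set n : ℕ := B0 + B1 + B2 + (i.toNat + j.toNat + 2 * N.toNat) + 2 with hn
  have h0 : ((B0:ℤ)) + B1 + B2 + ((i.toNat : ℤ) + (j.toNat : ℤ) + 2 * (N.toNat : ℤ)) + 2 = (n:ℤ) := by
    rw [hn]; push_cast; ring
  have hti : (i.toNat : ℤ) = i := Int.toNat_of_nonneg hi
  have htj : (j.toNat : ℤ) = j := Int.toNat_of_nonneg hj
  have htN : (N.toNat : ℤ) = N := Int.toNat_of_nonneg hN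
  have hbp : ∀ a : ℤ, (n:ℤ) - 1 ≤ a → Dop K a p = 0 := fun a ha => hB0 a (by omega)
  have hbj : ∀ a : ℤ, (n:ℤ) - 1 ≤ a → Dop K a (Hop K N D j p) = 0 := fun a ha =>
    hB1 a (by omega)
  have hbi : ∀ a : ℤ, (n:ℤ) - 1 ≤ a → Dop K a (Hop K N D i p) = 0 := fun a ha =>
    hB2 a (by omega)
  have Ej : Hop K N D j p = HopF K n N D j p := Hop_eq_HopF D p (by omega) (by omega) hbp
  have Ei : Hop K N D i p = HopF K n N D i p := Hop_eq_HopF D p (by omega) (by omega) hbp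
  have Eoutj : Hop K N D i (HopF K n N D j p) = HopF K n N D i (HopF K n N D j p) :=
    Hop_eq_HopF D _ (by omega) (by omega) (fun a ha => by rw [← Ej]; exact hbj a ha)
  have Eouti : Hop K N D j (HopF K n N D i p) = HopF K n N D j (HopF K n N D i p) :=
    Hop_eq_HopF D _ (by omega) (by omega) (fun a ha => by rw [← Ei]; exact hbi a ha)
  have Er : Hop K N D (i+j+N-1) p = HopF K n N D (i+j+N-1) p :=
    Hop_eq_HopF D p (by omega) (by omega) hbp
  rw [Ej, Ei, Eoutj, Eouti, Er]
  exact HopF_comm n N D i j p hi hj hN (by omega) hbp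

end
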